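/- arXiv:2601.10523 — 4 statements merged into one kernel-verified Lean document; each statement's English description precedes it below -/
import Mathlib

section
/- Let u be a finitely supported function on the integer lattice ℤⁿ and x_α the coordinate functions. Then Σ_{α=1}^n Σ_x Γ(x_α, u)²(x) d_x ≤ (1/(2n)) Σ_x Γ(u)(x) d_x. -/
/-!
On `ℤⁿ` the carré du champ is a sum over the `2n` neighbours `x ± e_α`. With
`a = u(x + e_α) - u(x)` and `b = u(x - e_α) - u(x)` this gives `Γ(x_α, u)(x) = (a - b)/(4n)`, while
`4n Γ(u)(x)` is the sum of `a² + b²` over `α`. The theorem is then `(a - b)² ≤ 2(a² + b²)`, summed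
over `α` and over the finitely many `x` within distance one of the support of `u`.
-/

open Finset

/-- Adjacency indicator on the integer lattice `ℤⁿ`: `μ x y = 1` iff `x` and `y`
are at `ℓ¹`-distance `1`. -/
def mu (n : ℕ) (x y : Fin n → ℤ) : ℝ :=
  if (∑ i, |x i - y i|) = 1 then 1 else 0

/-- Every vertex of `ℤⁿ` has degree `2n`. -/
def deg (n : ℕ) : ℝ := 2 * n

/-- The normalized Laplacian on `ℤⁿ`: `Δf(x) = (1/(2n)) ∑_{y∼x} (f(y) - f(x))`. -/
noncomputable def lap (n : ℕ) (f : (Fin n → ℤ) → ℝ) (x : Fin n → ℤ) : ℝ :=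
  (1 / deg n) * ∑ᶠ y, mu n x y * (f y - f x)

/-- The carré du champ operator on `ℤⁿ`:
`Γ(f,g)(x) = (1/(2 d_x)) ∑_y μ_{xy} (f(y)-f(x))(g(y)-g(x))`. -/
noncomputable def gam (n : ℕ) (f g : (Fin n → ℤ) → ℝ) (x : Fin n → ℤ) : ℝ :=
  (1 / (2 * deg n)) * ∑ᶠ y, mu n x y * (f y - f x) * (g y - g x)

/-- The `α`-th coordinate function on `ℤⁿ`. -/
def coord {n : ℕ} (α : Fin n) (x : Fin n → ℤ) : ℝ := x α

theorem Int.sum_units {M : Type*} [AddCommMonoid M] (f : ℤˣ → M) :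
    ∑ s, f s = f 1 + f (-1) := by
  rw [show (univ : Finset ℤˣ) = {1, -1} by decide, sum_pair (by decide)]

theorem exists_eq_single_of_sum_abs_eq_one {ι : Type*} [Fintype ι] [DecidableEq ι] {d : ι → ℤ}
    (h : ∑ i, |d i| = 1) : ∃ i, ∃ s : ℤˣ, d = Pi.single i (s : ℤ) := by
  obtain ⟨i, hi⟩ : ∃ i, d i ≠ 0 := by
    by_contra! h0
    simp [h0] at h
  have hdi : |d i| = 1 :=
    le_antisymm (h ▸ single_le_sum (fun j _ => abs_nonneg (d j)) (mem_univ i)) (Int.one_le_abs hi)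
  have hrest : ∑ j ∈ univ.erase i, |d j| = 0 := by
    linarith [add_sum_erase univ (fun j => |d j|) (mem_univ i)]
  refine ⟨i, (Int.isUnit_iff_abs_eq.mpr hdi).unit, funext fun j => ?_⟩
  by_cases hj : j = i
  · subst hj
    simp
  · rw [Pi.single_eq_of_ne hj]
    exact abs_eq_zero.mp ((sum_eq_zero_iff_of_nonneg fun j _ => abs_nonneg (d j)).mp hrest j
      (mem_erase.mpr ⟨hj, mem_univ j⟩))

section Lattice

variable {n : ℕ}

def unitStep (p : Fin n × ℤˣ) : Fin n → ℤ := Pi.single p.1 (p.2 : ℤ)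

theorem unitStep_injective : Function.Injective (unitStep (n := n)) := by
  rintro ⟨α, s⟩ ⟨β, t⟩ h
  have hαβ : α = β := by
    by_contra hne
    have := congrFun h α
    simp [unitStep, Pi.single_eq_of_ne hne] at this
  subst hαβ
  simpa [unitStep, Pi.single_injective, Units.val_inj] using h

theorem sum_abs_unitStep (p : Fin n × ℤˣ) : ∑ i, |unitStep p i| = 1 := by
  have h : ∀ i, |unitStep p i| = (Pi.single p.1 1 : Fin n → ℤ) i := by
    intro i
    by_cases hi : i = p.1
    · subst hi
      simpa [unitStep] using Int.isUnit_iff_abs_eq.mp p.2.isUnit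
    · simp [unitStep, Pi.single_eq_of_ne hi]
  simp [h]

theorem mu_add_unitStep (x : Fin n → ℤ) (p : Fin n × ℤˣ) : mu n x (x + unitStep p) = 1 := by
  simp [mu, sum_abs_unitStep]

theorem finsum_mu_mul (x : Fin n → ℤ) (F : (Fin n → ℤ) → ℝ) :
    ∑ᶠ y, mu n x y * F y = ∑ p : Fin n × ℤˣ, F (x + unitStep p) := by
  have hsupp : Function.support (fun y => mu n x y * F y) ⊆ image (x + unitStep ·) univ := by
    intro y hy
    have hmu : ∑ i, |(y - x) i| = 1 := by
      by_contra h
      simp_all [mu, abs_sub_comm]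
    obtain ⟨α, s, hd⟩ := exists_eq_single_of_sum_abs_eq_one hmu
    simp only [coe_image, coe_univ, Set.image_univ, Set.mem_range]
    exact ⟨(α, s), by rw [unitStep, ← hd, add_sub_cancel]⟩
  rw [finsum_eq_sum_of_support_subset _ hsupp,
    sum_image fun p _ q _ h => unitStep_injective (add_left_cancel h)]
  simp [mu_add_unitStep]

theorem gam_eq_sum (f g : (Fin n → ℤ) → ℝ) (x : Fin n → ℤ) :
    gam n f g x = 1 / (2 * deg n) *
      ∑ p : Fin n × ℤˣ, (f (x + unitStep p) - f x) * (g (x + unitStep p) - g x) := by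
  simp only [gam, mul_assoc, finsum_mu_mul]

theorem coord_add_unitStep_sub (α : Fin n) (x : Fin n → ℤ) (p : Fin n × ℤˣ) :
    coord α (x + unitStep p) - coord α x = (unitStep p α : ℝ) := by
  simp [coord]

theorem gam_coord (α : Fin n) (u : (Fin n → ℤ) → ℝ) (x : Fin n → ℤ) :
    gam n (coord α) u x =
      1 / (2 * deg n) * (u (x + unitStep (α, 1)) - u (x + unitStep (α, -1))) := by
  rw [gam_eq_sum]
  simp only [coord_add_unitStep_sub]
  rw [Fintype.sum_prod_type, Fintype.sum_eq_single α, Int.sum_units]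
  · simp [unitStep]
  · intro β hβ
    simp [unitStep, Pi.single_eq_of_ne' hβ]

theorem gam_self (u : (Fin n → ℤ) → ℝ) (x : Fin n → ℤ) :
    gam n u u x = 1 / (2 * deg n) * ∑ α : Fin n,
      ((u (x + unitStep (α, 1)) - u x) ^ 2 + (u (x + unitStep (α, -1)) - u x) ^ 2) := by
  simp only [gam_eq_sum, Fintype.sum_prod_type, Int.sum_units, sq]

theorem sum_gam_coord_sq_mul_deg_le (u : (Fin n → ℤ) → ℝ) (x : Fin n → ℤ) :
    ∑ α : Fin n, gam n (coord α) u x ^ 2 * deg n ≤ 1 / (2 * n) * (gam n u u x * deg n) := by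
  rw [gam_self, mul_sum, sum_mul, mul_sum]
  refine sum_le_sum fun α _ => ?_
  have hn : (0 : ℝ) < n := by exact_mod_cast α.pos
  set a := u (x + unitStep (α, 1)) - u x
  set b := u (x + unitStep (α, -1)) - u x
  have hab : (a - b) ^ 2 ≤ 2 * (a ^ 2 + b ^ 2) := by nlinarith [sq_nonneg (a + b)]
  rw [gam_coord, show u (x + unitStep (α, 1)) - u (x + unitStep (α, -1)) = a - b by ring, deg]
  field_simp
  nlinarith

theorem support_gam_subset (f u : (Fin n → ℤ) → ℝ) :
    (gam n f u).support ⊆ u.support ∪ ⋃ p, (· + unitStep p) ⁻¹' u.support := by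
  refine Function.support_subset_iff'.mpr fun x hx => ?_
  simp only [Set.mem_union, Set.mem_iUnion, Set.mem_preimage, Function.mem_support, not_or,
    not_exists, not_not] at hx
  simp [gam_eq_sum, hx.1, hx.2]

theorem hasFiniteSupport_gam (f : (Fin n → ℤ) → ℝ) {u : (Fin n → ℤ) → ℝ}
    (hu : u.HasFiniteSupport) : (gam n f u).HasFiniteSupport :=
  (hu.union (Set.finite_iUnion fun _ => hu.preimage (add_left_injective _).injOn)).subset
    (support_gam_subset f u)

end Lattice

theorem sum_coord_gamma_sq_le_general (n : ℕ)
    (u : (Fin n → ℤ) → ℝ) (hu : (Function.support u).Finite) :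
    ∑ α : Fin n, ∑ᶠ x, (gam n (coord α) u x) ^ 2 * deg n
      ≤ (1 / (2 * n)) * ∑ᶠ x, gam n u u x * deg n := by
  have hΓ : ∀ f, (gam n f u).HasFiniteSupport := fun f => hasFiniteSupport_gam f hu
  calc ∑ α : Fin n, ∑ᶠ x, gam n (coord α) u x ^ 2 * deg n
      = ∑ᶠ x, ∑ α : Fin n, gam n (coord α) u x ^ 2 * deg n :=
        (finsum_sum_comm _ _ fun α _ => by fun_prop (disch := simp)).symm
    _ ≤ ∑ᶠ x, 1 / (2 * n) * (gam n u u x * deg n) :=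
        finsum_le_finsum' (by fun_prop (disch := simp)) (by fun_prop (disch := simp))
          fun x => sum_gam_coord_sq_mul_deg_le u x
    _ = 1 / (2 * n) * ∑ᶠ x, gam n u u x * deg n := (mul_finsum _ _).symm

/-- For a finitely supported `u` on `ℤⁿ`,
`∑_α ∑_x Γ(x_α, u)²(x) d_x ≤ (1/(2n)) ∑_x Γ(u)(x) d_x`. -/
theorem sum_coord_gamma_sq_le (n : ℕ) (hn : 0 < n)
    (u : (Fin n → ℤ) → ℝ) (hu : (Function.support u).Finite) :
    ∑ α : Fin n, ∑ᶠ x, (gam n (coord α) u x) ^ 2 * deg n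
      ≤ (1 / (2 * n)) * ∑ᶠ x, gam n u u x * deg n :=
  sum_coord_gamma_sq_le_general n u hu
end

section
/- Let Ω ⊂ ℤⁿ be finite, g a coordinate function, and u a finitely supported function vanishing outside Ω. Then 2 Σ_x g(x) u(x) Γ(g,u)(x) d_x = −(1/(2n)) Σ_x u(x)² d_x + I_g(u), where I_g(u) = (1/4) Σ_{x,y} μ_{xy} |∇_{xy}g|² |∇_{xy}u|². -/
/-!
Expanding `Γ`, the left side is a double sum of `μ_{xy} g(x)u(x) ∇_{xy}g ∇_{xy}u` over ordered
pairs. Symmetrizing it in `x ↔ y` and using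
`(g(x)u(x) + g(y)u(y)) ∇g ∇u = ½ ∇(g²) ∇(u²) + ½ |∇g|² |∇u|²` turns it into
`¼ ∑ μ ∇(g²) ∇(u²) + I_g(u)`, and Green's formula rewrites the first term as
`-½ ∑_x u(x)² Δ(g²)(x) d_x` with `Δ(g²) = 1/n`. Every pair with `μ_{xy} ∇_{xy}u ≠ 0` has an endpoint
in `Ω`, hence both endpoints in `Ω + [-1, 1]ⁿ`, so all sums can be taken over that finite set.
-/

open Finset

open scoped Pointwise

section SymmetricWeights

variable {V : Type*} {μ : V → V → ℝ} (S : Finset V)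

theorem sum_sum_swap_of_symmetric (hμ : ∀ x y, μ x y = μ y x) (F : V → V → ℝ) :
    ∑ x ∈ S, ∑ y ∈ S, μ x y * F x y = ∑ x ∈ S, ∑ y ∈ S, μ x y * F y x := by
  rw [sum_comm]
  exact sum_congr rfl fun x _ => sum_congr rfl fun y _ => by rw [hμ]

theorem green_formula (hμ : ∀ x y, μ x y = μ y x) (f h : V → ℝ) :
    ∑ x ∈ S, ∑ y ∈ S, μ x y * ((f y - f x) * (h y - h x))
      = -2 * ∑ x ∈ S, h x * ∑ y ∈ S, μ x y * (f y - f x) := by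
  have hswap : ∑ x ∈ S, ∑ y ∈ S, μ x y * ((f y - f x) * h y)
      = -∑ x ∈ S, h x * ∑ y ∈ S, μ x y * (f y - f x) := by
    rw [sum_sum_swap_of_symmetric S hμ]
    simp only [mul_sum, ← sum_neg_distrib]
    exact sum_congr rfl fun x _ => sum_congr rfl fun y _ => by ring
  calc ∑ x ∈ S, ∑ y ∈ S, μ x y * ((f y - f x) * (h y - h x))
      = ∑ x ∈ S, ∑ y ∈ S, μ x y * ((f y - f x) * h y)
        - ∑ x ∈ S, h x * ∑ y ∈ S, μ x y * (f y - f x) := by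
        simp only [mul_sum, ← sum_sub_distrib]
        exact sum_congr rfl fun x _ => sum_congr rfl fun y _ => by ring
    _ = -2 * ∑ x ∈ S, h x * ∑ y ∈ S, μ x y * (f y - f x) := by rw [hswap]; ring

theorem symmetrization_formula (hμ : ∀ x y, μ x y = μ y x) (g u : V → ℝ) :
    ∑ x ∈ S, ∑ y ∈ S, μ x y * (g x * u x * ((g y - g x) * (u y - u x)))
      = 1 / 4 * ∑ x ∈ S, ∑ y ∈ S, μ x y * ((g y ^ 2 - g x ^ 2) * (u y ^ 2 - u x ^ 2))
        + 1 / 4 * ∑ x ∈ S, ∑ y ∈ S, μ x y * ((g y - g x) ^ 2 * (u y - u x) ^ 2) := by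
  set A := ∑ x ∈ S, ∑ y ∈ S, μ x y * (g x * u x * ((g y - g x) * (u y - u x)))
  have hswap : A = ∑ x ∈ S, ∑ y ∈ S, μ x y * (g y * u y * ((g y - g x) * (u y - u x))) := by
    rw [sum_sum_swap_of_symmetric S hμ]
    exact sum_congr rfl fun x _ => sum_congr rfl fun y _ => by ring
  calc A = 1 / 2 * (A + A) := by ring
    _ = 1 / 2 * ∑ x ∈ S, ∑ y ∈ S,
          μ x y * ((g x * u x + g y * u y) * ((g y - g x) * (u y - u x))) := by
        nth_rw 2 [hswap]
        simp only [A, ← sum_add_distrib]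
        exact congrArg _ (sum_congr rfl fun x _ => sum_congr rfl fun y _ => by ring)
    _ = _ := by
        simp only [mul_sum, ← sum_add_distrib]
        exact sum_congr rfl fun x _ => sum_congr rfl fun y _ => by ring

end SymmetricWeights

section Lattice

variable {n : ℕ}

theorem mu_comm (x y : Fin n → ℤ) : mu n x y = mu n y x := by
  rw [mu, mu, sum_congr rfl fun i _ => abs_sub_comm (x i) (y i)]

theorem sum_abs_sub_eq_one_of_mu_ne_zero {x y : Fin n → ℤ} (h : mu n x y ≠ 0) :
    ∑ i, |x i - y i| = 1 := by
  by_contra hne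
  exact h (if_neg hne)

theorem mu_add_single (x : Fin n → ℤ) (α : Fin n) {s : ℤ} (hs : |s| = 1) :
    mu n x (x + Pi.single α s) = 1 := by
  rw [mu, if_pos]
  simp [Pi.single_apply, apply_ite (|·|), hs]

theorem sub_mem_Icc_neg_one_one_of_mu_ne_zero {x y : Fin n → ℤ} (h : mu n x y ≠ 0) :
    y - x ∈ Icc (-1) 1 := by
  have hsum := sum_abs_sub_eq_one_of_mu_ne_zero h
  rw [mem_Icc, Pi.le_def, Pi.le_def, ← forall_and]
  intro i
  rw [Pi.neg_apply, Pi.one_apply, Pi.sub_apply, ← abs_le, abs_sub_comm, ← hsum]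
  exact single_le_sum (f := fun i => |x i - y i|) (fun j _ => abs_nonneg _) (mem_univ i)

theorem mem_add_Icc_neg_one_one_of_mu_ne_zero {Ω : Finset (Fin n → ℤ)} {x y : Fin n → ℤ}
    (hx : x ∈ Ω) (h : mu n x y ≠ 0) : y ∈ Ω + Icc (-1) 1 :=
  mem_add.2 ⟨x, hx, y - x, sub_mem_Icc_neg_one_one_of_mu_ne_zero h, add_sub_cancel x y⟩

theorem eq_add_single_or_eq_sub_single_of_mu_ne_zero {x y : Fin n → ℤ} {α : Fin n}
    (h : mu n x y ≠ 0) (hα : y α ≠ x α) :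
    y = x + Pi.single α 1 ∨ y = x - Pi.single α 1 := by
  have hsum := sum_abs_sub_eq_one_of_mu_ne_zero h
  rw [← add_sum_erase _ _ (mem_univ α)] at hsum
  have hαpos : 1 ≤ |x α - y α| := Int.one_le_abs (sub_ne_zero.2 hα.symm)
  have hrest := sum_nonneg fun i (_ : i ∈ univ.erase α) => abs_nonneg (x i - y i)
  have hother : ∀ i ≠ α, y i = x i := fun i hi => by
    have := (sum_eq_zero_iff_of_nonneg fun i _ => abs_nonneg (x i - y i)).1 (by omega) i
      (mem_erase.2 ⟨hi, mem_univ i⟩)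
    exact (sub_eq_zero.1 (abs_eq_zero.1 this)).symm
  have hy : y = x + Pi.single α (y α - x α) := by
    ext i
    by_cases hi : i = α
    · subst hi; simp
    · simp [hi, hother i hi]
  rcases abs_eq (zero_le_one' ℤ) |>.1 (show |y α - x α| = 1 by rw [abs_sub_comm]; omega)
    with h1 | h1
  · exact .inl (h1 ▸ hy)
  · exact .inr (by rw [hy, h1, Pi.single_neg, ← sub_eq_add_neg])

theorem subset_add_Icc_neg_one_one (Ω : Finset (Fin n → ℤ)) : Ω ⊆ Ω + Icc (-1) 1 :=
  subset_add_left Ω (by simp [mem_Icc])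

theorem finsum_mu_mul_eq_sum {Ω : Finset (Fin n → ℤ)} {x : Fin n → ℤ} (hx : x ∈ Ω)
    (F : (Fin n → ℤ) → ℝ) :
    ∑ᶠ y, mu n x y * F y = ∑ y ∈ Ω + Icc (-1) 1, mu n x y * F y :=
  finsum_eq_sum_of_support_subset _ fun _ hy =>
    mem_add_Icc_neg_one_one_of_mu_ne_zero hx (left_ne_zero_of_mul hy)

theorem finsum_finsum_mu_mul_eq_sum_sum {Ω : Finset (Fin n → ℤ)}
    (F : (Fin n → ℤ) → (Fin n → ℤ) → ℝ) (hF : ∀ x y, x ∉ Ω → y ∉ Ω → F x y = 0) :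
    ∑ᶠ x, ∑ᶠ y, mu n x y * F x y
      = ∑ x ∈ Ω + Icc (-1) 1, ∑ y ∈ Ω + Icc (-1) 1, mu n x y * F x y := by
  have hinner : ∀ x, ∑ᶠ y, mu n x y * F x y = ∑ y ∈ Ω + Icc (-1) 1, mu n x y * F x y := by
    intro x
    refine finsum_eq_sum_of_support_subset _ fun y hy => ?_
    by_cases hx : x ∈ Ω
    · exact mem_add_Icc_neg_one_one_of_mu_ne_zero hx (left_ne_zero_of_mul hy)
    · by_contra hy'
      exact hy (by simp only [hF x y hx fun h => hy' (subset_add_Icc_neg_one_one Ω h), mul_zero])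
  rw [finsum_congr hinner]
  refine finsum_eq_sum_of_support_subset _ fun x hx => ?_
  obtain ⟨y, -, hxy⟩ := exists_ne_zero_of_sum_ne_zero hx
  by_cases hy : y ∈ Ω
  · exact mem_add_Icc_neg_one_one_of_mu_ne_zero hy (mu_comm x y ▸ left_ne_zero_of_mul hxy)
  · by_contra hx'
    exact hxy (by rw [hF x y (fun h => hx' (subset_add_Icc_neg_one_one Ω h)) hy, mul_zero])

theorem finsum_mu_mul_eq_of_vanish_on_hyperplane (x : Fin n → ℤ) (α : Fin n)
    (F : (Fin n → ℤ) → ℝ) (hF : ∀ y, y α = x α → F y = 0) :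
    ∑ᶠ y, mu n x y * F y = F (x + Pi.single α 1) + F (x - Pi.single α 1) := by
  have hne : x + Pi.single α 1 ≠ x - Pi.single α 1 := fun h => by
    have := congrFun h α
    simp at this
    omega
  have hsupp : Function.support (fun y => mu n x y * F y)
      ⊆ ({x + Pi.single α 1, x - Pi.single α 1} : Finset _) := fun y hy => by
    have hα : y α ≠ x α := fun h => right_ne_zero_of_mul hy (hF y h)
    simpa using eq_add_single_or_eq_sub_single_of_mu_ne_zero (left_ne_zero_of_mul hy) hα
  have hminus : mu n x (x - Pi.single α 1) = 1 := by
    rw [sub_eq_add_neg, ← Pi.single_neg]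
    exact mu_add_single x α (by norm_num)
  rw [finsum_eq_sum_of_support_subset _ hsupp, sum_pair hne, hminus,
    mu_add_single x α (abs_one), one_mul, one_mul]

theorem two_mul_sum_mul_gam_mul_deg (hn : n ≠ 0) {Ω : Finset (Fin n → ℤ)}
    (w f u : (Fin n → ℤ) → ℝ) (hw : ∀ x ∉ Ω, w x = 0) :
    2 * ∑ x ∈ Ω, w x * gam n f u x * deg n
      = ∑ x ∈ Ω + Icc (-1) 1, ∑ y ∈ Ω + Icc (-1) 1,
          mu n x y * (w x * ((f y - f x) * (u y - u x))) := by
  have hn' : (n : ℝ) ≠ 0 := Nat.cast_ne_zero.2 hn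
  rw [mul_sum, ← sum_subset (subset_add_Icc_neg_one_one Ω) fun x _ hx => by simp [hw x hx]]
  refine sum_congr rfl fun x hx => ?_
  rw [← finsum_mu_mul_eq_sum hx, gam, deg]
  calc _ = w x * ∑ᶠ y, mu n x y * (f y - f x) * (u y - u x) := by field_simp
    _ = _ := by rw [mul_finsum]; exact finsum_congr fun y => by ring

theorem lap_coord_sq (α : Fin n) (x : Fin n → ℤ) :
    lap n (fun y => coord α y ^ 2) x = 1 / n := by
  have hn : (n : ℝ) ≠ 0 := Nat.cast_ne_zero.2 α.pos.ne'
  rw [lap, finsum_mu_mul_eq_of_vanish_on_hyperplane x α _ fun y hy => by simp [coord, hy]]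
  simp only [coord, deg, Pi.add_apply, Pi.sub_apply, Pi.single_eq_same]
  field_simp
  push_cast
  ring

end Lattice

theorem symmetrization_identity_general (n : ℕ) (Ω : Finset (Fin n → ℤ))
    (u : (Fin n → ℤ) → ℝ) (hu0 : ∀ x ∉ Ω, u x = 0) (α : Fin n) :
    2 * ∑ x ∈ Ω, coord α x * u x * gam n (coord α) u x * deg n
      = -(1 / (2 * n)) * ∑ x ∈ Ω, u x ^ 2 * deg n
        + (1 / 4) *
          ∑ᶠ x, ∑ᶠ y, mu n x y * (coord α y - coord α x) ^ 2 * (u y - u x) ^ 2 := by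
  set g := coord α
  set S := Ω + Icc (-1 : Fin n → ℤ) 1
  have hn : (n : ℝ) ≠ 0 := Nat.cast_ne_zero.2 α.pos.ne'
  have hlhs := two_mul_sum_mul_gam_mul_deg α.pos.ne' (Ω := Ω) (fun x => g x * u x) g u
    fun x hx => by simp [hu0 x hx]
  have hgreen : ∑ x ∈ S, ∑ y ∈ S, mu n x y * ((g y ^ 2 - g x ^ 2) * (u y ^ 2 - u x ^ 2))
      = -4 * ∑ x ∈ Ω, u x ^ 2 := by
    rw [green_formula S (mu_comm (n := n)) (fun x => g x ^ 2) (fun x => u x ^ 2),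
      ← sum_subset (subset_add_Icc_neg_one_one Ω) fun x _ hx => by simp [hu0 x hx]]
    have hlap : ∀ x ∈ Ω, ∑ y ∈ S, mu n x y * (g y ^ 2 - g x ^ 2) = 2 := fun x hx => by
      have h := lap_coord_sq α x
      rw [lap, deg, finsum_mu_mul_eq_sum hx] at h
      field_simp at h
      exact h
    rw [sum_congr rfl fun x hx => by rw [hlap x hx], ← sum_mul]
    ring
  have hI : ∑ᶠ x, ∑ᶠ y, mu n x y * (g y - g x) ^ 2 * (u y - u x) ^ 2
      = ∑ x ∈ S, ∑ y ∈ S, mu n x y * ((g y - g x) ^ 2 * (u y - u x) ^ 2) := by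
    simp only [mul_assoc]
    exact finsum_finsum_mu_mul_eq_sum_sum _ fun x y hx hy => by simp [hu0 x hx, hu0 y hy]
  rw [hlhs, symmetrization_formula S (mu_comm (n := n)), hgreen, hI, ← sum_mul, deg]
  field_simp

/-- For a coordinate function `g = x_α` and a function `u` vanishing outside a
finite `Ω ⊂ ℤⁿ`,
`2 ∑_x g u Γ(g,u) d_x = -(1/(2n)) ∑_x u² d_x + I_g(u)` where
`I_g(u) = (1/4) ∑_{x,y} μ_{xy} |∇_{xy}g|² |∇_{xy}u|²`. -/
theorem symmetrization_identity (n : ℕ) (hn : 0 < n) (Ω : Finset (Fin n → ℤ))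
    (u : (Fin n → ℤ) → ℝ) (hu0 : ∀ x ∉ Ω, u x = 0) (α : Fin n) :
    2 * ∑ x ∈ Ω, coord α x * u x * gam n (coord α) u x * deg n
      = -(1 / (2 * n)) * ∑ x ∈ Ω, u x ^ 2 * deg n
        + (1 / 4) *
          ∑ᶠ x, ∑ᶠ y, mu n x y * (coord α y - coord α x) ^ 2 * (u y - u x) ^ 2 :=
  symmetrization_identity_general n Ω u hu0 α
end

section
/- (Yang's first type inequality for the discrete Schrödinger operator) Let Ω be a finite subset of ℤⁿ, V ≥ 0 on Ω, ρ > 0 on Ω with minimum ρ_min and maximum ρ_max, and let 0 < λ_1 ≤ ⋯ ≤ λ_N (N = |Ω|) be the eigenvalues of the Dirichlet problem −Δu + Vu = λρu in Ω, u = 0 on ∂Ω. Then for any 1 ≤ k ≤ N − 1: Σ_{i=1}^k (λ_{k+1} − λ_i) [ λ_{k+1}(ρ_min/ρ_max − ρ_min λ_i) − λ_i(ρ_min/ρ_max − ρ_min λ_i + 4/n) ] ≤ 0. -/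
open Finset

/-!
Yang's inequality is an abstract commutator bound. If `L` is symmetric with orthonormal
eigenbasis `uᵢ` and `X` is symmetric, the Rayleigh–Ritz principle applied to the trial vectors
`X uᵢ - ∑_{j ≤ k} ⟨X uᵢ, uⱼ⟩ uⱼ` gives, after summing over `i ≤ k`,
`∑ᵢ (Λ - λᵢ)² ⟨[L, X] uᵢ, X uᵢ⟩ ≤ ∑ᵢ (Λ - λᵢ) ‖[L, X] uᵢ‖²` whenever `λₖ ≤ Λ ≤ λₖ₊₁`; the cross
terms cancel because `⟨[L, X] uᵢ, uⱼ⟩ = (λⱼ - λᵢ) ⟨X uᵢ, uⱼ⟩` is antisymmetric in `i, j`.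

On `ℤⁿ` take `L = (-Δ + V) / ρ` and `X` a coordinate function `x_α`. Then
`[L, X] u (x) = -(u (x + e_α) - u (x - e_α)) / (2n ρ(x))`, so by the energy bound
`∑_α ‖[L, X] u‖² ≤ 4λ / (2n ρ_min)`. And `2 ⟨[L, X] u, X u⟩ = -⟨[[L, X], X] u, u⟩` with
`[[L, X], X] u (x) = -(u (x + e_α) + u (x - e_α)) / (2n ρ(x))`, so summing over `α` gives
`2n ∑ u² - ⟨-Δu, u⟩ ≥ 1 / ρ_max - λ`.
-/

theorem sum_sum_eq_zero_of_antisymm {ι : Type*} (t : Finset ι) (F : ι → ι → ℝ)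
    (hF : ∀ i j, F j i = -F i j) : ∑ i ∈ t, ∑ j ∈ t, F i j = 0 := by
  have h : ∑ i ∈ t, ∑ j ∈ t, F i j = ∑ i ∈ t, ∑ j ∈ t, -F i j := by
    rw [sum_comm]
    exact sum_congr rfl fun i _ => sum_congr rfl fun j _ => hF i j
  simp only [sum_neg_distrib] at h
  linarith

section Abstract

variable {ι E : Type*} [AddCommGroup E] [Module ℝ E] {B : LinearMap.BilinForm ℝ E}

variable (B) in
def orthResidual (t : Finset ι) (u : ι → E) (g : E) : E :=
  g - ∑ j ∈ t, B g (u j) • u j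

variable {t : Finset ι} {u : ι → E}

theorem apply_orthResidual (h g : E) :
    B h (orthResidual B t u g) = B h g - ∑ j ∈ t, B g (u j) * B h (u j) := by
  simp [orthResidual]

theorem orthResidual_apply (g h : E) :
    B (orthResidual B t u g) h = B g h - ∑ j ∈ t, B g (u j) * B (u j) h := by
  simp [orthResidual]

variable [DecidableEq ι]

theorem orthResidual_apply_eq_zero
    (horth : ∀ i ∈ t, ∀ j ∈ t, B (u i) (u j) = if i = j then 1 else 0) (g : E) {j : ι}
    (hj : j ∈ t) : B (orthResidual B t u g) (u j) = 0 := by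
  rw [orthResidual_apply, sum_congr rfl fun i hi => by rw [horth i hi j hj]]
  simp [hj]

structure IsEigenbasis (B : LinearMap.BilinForm ℝ E) (L : Module.End ℝ E) (S : Submodule ℝ E)
    (s : Finset ι) (u : ι → E) (lam : ι → ℝ) : Prop where
  mem : ∀ j ∈ s, u j ∈ S
  apply_eq : ∀ j ∈ s, L (u j) = lam j • u j
  orthonormal : ∀ i ∈ s, ∀ j ∈ s, B (u i) (u j) = if i = j then 1 else 0
  eq_sum : ∀ f ∈ S, f = ∑ j ∈ s, B f (u j) • u j

namespace IsEigenbasis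

variable {L : Module.End ℝ E} {S : Submodule ℝ E} {s : Finset ι} {lam : ι → ℝ}

theorem mul_le_apply_of_orthogonal (hu : IsEigenbasis B L S s u lam)
    (hL : ∀ f ∈ S, ∀ g ∈ S, B (L f) g = B f (L g)) {Λ : ℝ} (hhigh : ∀ j ∈ s \ t, Λ ≤ lam j)
    {φ : E} (hφ : φ ∈ S) (hφt : ∀ j ∈ t, B φ (u j) = 0) :
    Λ * B φ φ ≤ B (L φ) φ := by
  have hexp := hu.eq_sum φ hφ
  have hφφ : B φ φ = ∑ j ∈ s, B φ (u j) * B φ (u j) := by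
    rw [congrArg (B φ) hexp]
    simp
  have hLφφ : B (L φ) φ = ∑ j ∈ s, lam j * (B φ (u j) * B φ (u j)) := by
    rw [congrArg (B (L φ)) hexp]
    simp only [map_sum, map_smul, smul_eq_mul]
    refine sum_congr rfl fun j hj => ?_
    rw [hL φ hφ (u j) (hu.mem j hj), hu.apply_eq j hj, map_smul, smul_eq_mul]
    ring
  rw [hφφ, hLφφ, mul_sum]
  refine sum_le_sum fun j hj => ?_
  by_cases hjt : j ∈ t
  · simp [hφt j hjt]
  · exact mul_le_mul_of_nonneg_right (hhigh j (mem_sdiff.2 ⟨hj, hjt⟩)) (mul_self_nonneg _)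

theorem sq_mul_le_of_apply_eq_smul_add (hu : IsEigenbasis B L S s u lam) (hBs : B.IsSymm)
    (hBn : B.IsNonneg) (hL : ∀ f ∈ S, ∀ g ∈ S, B (L f) g = B f (L g)) (hts : t ⊆ s) {Λ μ : ℝ}
    (hhigh : ∀ j ∈ s \ t, Λ ≤ lam j) (hμ : μ ≤ Λ) {f c : E} (hf : f ∈ S) (hc : L f = μ • f + c) :
    (Λ - μ) ^ 2 * (B c f - ∑ j ∈ t, B f (u j) * B c (u j))
      ≤ (Λ - μ) * (B c c - ∑ j ∈ t, B c (u j) ^ 2) := by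
  have horth : ∀ i ∈ t, ∀ j ∈ t, B (u i) (u j) = if i = j then 1 else 0 :=
    fun i hi j hj => hu.orthonormal i (hts hi) j (hts hj)
  set φ := orthResidual B t u f
  set ψ := orthResidual B t u c
  have hφS : φ ∈ S := S.sub_mem hf (S.sum_mem fun j hj => S.smul_mem _ (hu.mem j (hts hj)))
  have hφu : ∀ j ∈ t, B φ (u j) = 0 := fun j hj => orthResidual_apply_eq_zero horth f hj
  have huφ : ∀ j ∈ t, B (u j) φ = 0 := fun j hj => (hBs.eq _ _).trans (hφu j hj)
  have huψ : ∀ j ∈ t, B (u j) ψ = 0 :=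
    fun j hj => (hBs.eq _ _).trans (orthResidual_apply_eq_zero horth c hj)
  have hLφ : B (L φ) φ = μ * B φ φ + B c φ := by
    have hLφf : B (L φ) φ = B (L φ) f := by
      rw [apply_orthResidual, sub_eq_self]
      refine sum_eq_zero fun j hj => ?_
      rw [hL φ hφS _ (hu.mem j (hts hj)), hu.apply_eq j (hts hj), map_smul, hφu j hj,
        smul_zero, mul_zero]
    have hφf : B φ f = B φ φ := by
      rw [apply_orthResidual (g := f), sum_eq_zero fun j hj => by rw [hφu j hj, mul_zero], sub_zero]
    rw [hLφf, hL φ hφS f hf, hc, map_add, map_smul, smul_eq_mul, hφf, hBs.eq φ c]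
  have hray := hu.mul_le_apply_of_orthogonal hL hhigh hφS hφu
  have hw : B c φ = B c f - ∑ j ∈ t, B f (u j) * B c (u j) := apply_orthResidual c f
  have hψφ : B ψ φ = B c φ := by
    rw [orthResidual_apply, sum_eq_zero fun j hj => by rw [huφ j hj, mul_zero], sub_zero]
  have hψψ : B ψ ψ = B c c - ∑ j ∈ t, B c (u j) ^ 2 := by
    rw [apply_orthResidual, sum_eq_zero fun j hj => by rw [(hBs.eq _ _).symm.trans (huψ j hj),
      mul_zero], sub_zero, orthResidual_apply]
    simp only [sq, hBs.eq (u _) c]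
  -- Rayleigh–Ritz for `φ` gives `(Λ - μ) B φ φ ≤ B c φ = B ψ φ`; combine with
  -- `0 ≤ B ((Λ - μ) • φ - ψ) ((Λ - μ) • φ - ψ)`.
  have hquad := hBn.nonneg ((Λ - μ) • φ - ψ)
  simp only [map_sub, map_smul, LinearMap.sub_apply, LinearMap.smul_apply, smul_eq_mul,
    hBs.eq φ ψ, hψφ] at hquad
  rw [← hw, ← hψψ]
  nlinarith [mul_nonneg (sub_nonneg.2 hμ) hquad,
    mul_nonneg (sq_nonneg (Λ - μ)) (by linarith : 0 ≤ B c φ - (Λ - μ) * B φ φ)]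

theorem sum_sq_mul_lie_le (hu : IsEigenbasis B L S s u lam) (hBs : B.IsSymm) (hBn : B.IsNonneg)
    (hL : ∀ f ∈ S, ∀ g ∈ S, B (L f) g = B f (L g)) {X : Module.End ℝ E}
    (hX : ∀ f g, B (X f) g = B f (X g)) (hXS : ∀ f ∈ S, X f ∈ S) (hts : t ⊆ s) {Λ : ℝ}
    (hlow : ∀ i ∈ t, lam i ≤ Λ) (hhigh : ∀ j ∈ s \ t, Λ ≤ lam j) :
    ∑ i ∈ t, (Λ - lam i) ^ 2 * B (⁅L, X⁆ (u i)) (X (u i))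
      ≤ ∑ i ∈ t, (Λ - lam i) * B (⁅L, X⁆ (u i)) (⁅L, X⁆ (u i)) := by
  have hLX : ∀ i ∈ s, L (X (u i)) = lam i • X (u i) + ⁅L, X⁆ (u i) := by
    intro i hi
    rw [Ring.lie_def, LinearMap.sub_apply, Module.End.mul_apply, Module.End.mul_apply,
      hu.apply_eq i hi, map_smul]
    abel
  have hb : ∀ i ∈ s, ∀ j ∈ s,
      B (⁅L, X⁆ (u i)) (u j) = (lam j - lam i) * B (X (u i)) (u j) := by
    intro i hi j hj
    have h := hL _ (hXS _ (hu.mem i hi)) _ (hu.mem j hj)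
    rw [hLX i hi, hu.apply_eq j hj, map_add, map_smul, map_smul] at h
    simp only [LinearMap.add_apply, LinearMap.smul_apply, smul_eq_mul] at h
    linarith
  have ha : ∀ i j, B (X (u j)) (u i) = B (X (u i)) (u j) := fun i j => by
    rw [hX, hBs.eq, hX]
  have hcross : ∑ i ∈ t, ∑ j ∈ t, ((Λ - lam i) ^ 2 * (B (X (u i)) (u j) * B (⁅L, X⁆ (u i)) (u j))
      - (Λ - lam i) * B (⁅L, X⁆ (u i)) (u j) ^ 2) = 0 := by
    rw [← sum_sum_eq_zero_of_antisymm t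
      (fun i j => (Λ - lam i) * (Λ - lam j) * (lam j - lam i) * B (X (u i)) (u j) ^ 2)
      fun i j => by simp only [ha]; ring]
    exact sum_congr rfl fun i hi => sum_congr rfl fun j hj => by
      rw [hb i (hts hi) j (hts hj)]; ring
  have hsum := sum_le_sum fun i hi => hu.sq_mul_le_of_apply_eq_smul_add hBs hBn hL hts hhigh
    (hlow i hi) (hXS _ (hu.mem i (hts hi))) (hLX i (hts hi))
  simp only [mul_sub, mul_sum, sum_sub_distrib] at hsum hcross
  linarith

end IsEigenbasis

theorem two_mul_apply_lie_eq {B : LinearMap.BilinForm ℝ E}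
    {L X : Module.End ℝ E} {S : Submodule ℝ E} (hL : ∀ f ∈ S, ∀ g ∈ S, B (L f) g = B f (L g))
    (hX : ∀ f g, B (X f) g = B f (X g)) (hXS : ∀ f ∈ S, X f ∈ S) {v : E} (hv : v ∈ S) {μ : ℝ}
    (hLv : L v = μ • v) :
    2 * B (⁅L, X⁆ v) (X v) = -B (⁅⁅L, X⁆, X⁆ v) v := by
  have h₁ : B (L (X (X v))) v = μ * B (X v) (X v) := by
    rw [hL _ (hXS _ (hXS v hv)) v hv, hLv, map_smul, smul_eq_mul, hX]
  have h₂ : B (X (L (X v))) v = B (L (X v)) (X v) := hX _ _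
  have h₃ : B (X (X v)) v = B (X v) (X v) := hX _ _
  simp only [Ring.lie_def, LinearMap.sub_apply, Module.End.mul_apply, map_sub, hLv, map_smul,
    LinearMap.smul_apply, smul_eq_mul, h₁, h₂, h₃]
  ring

end Abstract

section WeightedInner

variable {α : Type*} {Ω : Finset α} {w : α → ℝ}

noncomputable def weightedInner (Ω : Finset α) (w : α → ℝ) : LinearMap.BilinForm ℝ (α → ℝ) :=
  LinearMap.mk₂ ℝ (fun f g => ∑ x ∈ Ω, f x * g x * w x)
    (fun _ _ _ => by simp only [Pi.add_apply, add_mul, sum_add_distrib])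
    (fun _ _ _ => by simp only [Pi.smul_apply, smul_eq_mul, mul_sum, mul_assoc])
    (fun _ _ _ => by simp only [Pi.add_apply, mul_add, add_mul, sum_add_distrib])
    (fun _ _ _ => by
      simp only [Pi.smul_apply, smul_eq_mul, mul_sum]; exact sum_congr rfl fun _ _ => by ring)

theorem weightedInner_apply (f g : α → ℝ) :
    weightedInner Ω w f g = ∑ x ∈ Ω, f x * g x * w x := rfl

theorem weightedInner_isSymm : (weightedInner Ω w).IsSymm :=
  ⟨fun _ _ => sum_congr rfl fun _ _ => by ring⟩

theorem weightedInner_isNonneg (hw : ∀ x ∈ Ω, 0 ≤ w x) : (weightedInner Ω w).IsNonneg :=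
  ⟨fun _ => sum_nonneg fun x hx => mul_nonneg (mul_self_nonneg _) (hw x hx)⟩

variable (Ω) in
def supportedIn : Submodule ℝ (α → ℝ) := Submodule.pi (↑Ω)ᶜ fun _ => ⊥

theorem mem_supportedIn {f : α → ℝ} : f ∈ supportedIn Ω ↔ ∀ x ∉ Ω, f x = 0 := by
  simp [supportedIn]

theorem weightedInner_mulLeft_comm (a f g : α → ℝ) :
    weightedInner Ω w (LinearMap.mulLeft ℝ a f) g = weightedInner Ω w f (LinearMap.mulLeft ℝ a g) :=
  sum_congr rfl fun _ _ => by simp only [LinearMap.mulLeft_apply, Pi.mul_apply]; ring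

theorem mulLeft_mem_supportedIn (a : α → ℝ) {f : α → ℝ} (hf : f ∈ supportedIn Ω) :
    LinearMap.mulLeft ℝ a f ∈ supportedIn Ω :=
  mem_supportedIn.2 fun x hx => by simp [mem_supportedIn.1 hf x hx]

theorem eq_sum_weightedInner_smul {ι : Type*} [DecidableEq ι] {s : Finset ι}
    (hcard : s.card = Ω.card) {u : ι → α → ℝ} (hu : ∀ j ∈ s, u j ∈ supportedIn Ω)
    (horth : ∀ i ∈ s, ∀ j ∈ s, weightedInner Ω w (u i) (u j) = if i = j then 1 else 0)
    {f : α → ℝ} (hf : f ∈ supportedIn Ω) :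
    f = ∑ j ∈ s, weightedInner Ω w f (u j) • u j := by
  set B := weightedInner Ω w
  have hcoef : ∀ c : ι → ℝ, ∀ j ∈ s, B (∑ i ∈ s, c i • u i) (u j) = c j := by
    intro c j hj
    simp only [map_sum, map_smul, LinearMap.sum_apply, LinearMap.smul_apply, smul_eq_mul]
    rw [sum_congr rfl fun i hi => by rw [horth i hi j hj]]
    simp [hj]
  let ext : (s → ℝ) → ι → ℝ := fun c i => if h : i ∈ s then c ⟨i, h⟩ else 0
  have hext : ∀ c : s → ℝ, ∀ x, (∑ i ∈ s, ext c i • u i) x = ∑ i : s, c i * u i x := by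
    intro c x
    rw [← sum_coe_sort s]
    simp [ext]
  -- the restrictions of the `u j` to `Ω` are `#Ω` linearly independent vectors of `Ω → ℝ`
  let v : s → Ω → ℝ := fun j x => u j x
  have hv : LinearIndependent ℝ v := by
    refine Fintype.linearIndependent_iff.2 fun c hc j => ?_
    have hzero : ∀ x ∈ Ω, ∑ i : s, c i * u i x = 0 := fun x hx => by
      simpa [v] using congrFun hc ⟨x, hx⟩
    rw [show c j = ext c j by simp [ext], ← hcoef (ext c) j j.2, weightedInner_apply]
    exact sum_eq_zero fun x hx => by rw [hext, hzero x hx, zero_mul, zero_mul]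
  have hspan := hv.span_eq_top_of_card_eq_finrank' (by simp [hcard])
  obtain ⟨c, hc⟩ := (Submodule.mem_span_range_iff_exists_fun ℝ).1
    (hspan ▸ Submodule.mem_top : (fun x : Ω => f x) ∈ Submodule.span ℝ (Set.range v))
  have hfc : f = ∑ i ∈ s, ext c i • u i := by
    funext x
    rw [hext]
    by_cases hx : x ∈ Ω
    · simpa [v] using (congrFun hc ⟨x, hx⟩).symm
    · rw [mem_supportedIn.1 hf x hx]
      exact (sum_eq_zero fun i _ => by rw [mem_supportedIn.1 (hu i i.2) x hx, mul_zero]).symm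
  calc f = ∑ i ∈ s, ext c i • u i := hfc
    _ = ∑ j ∈ s, weightedInner Ω w f (u j) • u j :=
      sum_congr rfl fun j hj => by rw [hfc, hcoef _ j hj]

end WeightedInner

section Lattice

variable {n : ℕ}

theorem deg_nonneg : 0 ≤ deg n := by simp [deg]

theorem deg_pos (hn : 0 < n) : 0 < deg n := by simp [deg, hn]

def neighbor (x : Fin n → ℤ) (p : Fin n × Bool) : Fin n → ℤ :=
  x + Pi.single p.1 (if p.2 then 1 else -1)

theorem neighbor_neighbor (x : Fin n → ℤ) (p : Fin n × Bool) :
    neighbor (neighbor x p) (p.1, !p.2) = x := by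
  rcases p with ⟨a, _ | _⟩ <;> simp [neighbor, add_assoc, ← Pi.single_add]

theorem neighbor_injective (x : Fin n → ℤ) : Function.Injective (neighbor x) := by
  rintro ⟨a, b⟩ ⟨a', b'⟩ h
  have h' := congrFun (add_left_cancel h) a
  have ha : a' = a := by
    by_contra hne
    cases b <;> simp [Ne.symm hne] at h'
  subst ha
  cases b <;> cases b' <;> simp at h' ⊢

theorem mu_neighbor (x : Fin n → ℤ) (p : Fin n × Bool) : mu n x (neighbor x p) = 1 := by
  have : ∑ i, |x i - neighbor x p i| = 1 := by
    rcases p with ⟨a, _ | _⟩ <;>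
      rw [sum_eq_single a fun i _ hi => by simp [neighbor, hi]] <;> simp [neighbor]
  simp [mu, this]

theorem exists_eq_neighbor_of_mu_ne_zero {x y : Fin n → ℤ} (h : mu n x y ≠ 0) :
    ∃ p, y = neighbor x p := by
  have hsum : ∑ i, |x i - y i| = 1 := by
    by_contra hc
    simp [mu, hc] at h
  obtain ⟨a, ha⟩ : ∃ a, x a - y a ≠ 0 := by
    by_contra! hc
    simp [hc] at hsum
  rw [← add_sum_erase _ _ (mem_univ a)] at hsum
  have hrest := sum_nonneg fun i (_ : i ∈ univ.erase a) => abs_nonneg (x i - y i)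
  have hone : |x a - y a| = 1 := le_antisymm (by linarith) (Int.one_le_abs ha)
  have hzero : ∀ i ≠ a, y i = x i := fun i hi => by
    have := (sum_eq_zero_iff_of_nonneg fun i (_ : i ∈ univ.erase a) => abs_nonneg (x i - y i)).1
      (by linarith) i (mem_erase.2 ⟨hi, mem_univ i⟩)
    rw [abs_eq_zero, sub_eq_zero] at this
    exact this.symm
  have hy : y = x + Pi.single a (y a - x a) := funext fun i => by
    by_cases hi : i = a
    · subst hi; simp
    · simp [hi, hzero i hi]
  rcases abs_eq (zero_le_one' ℤ) |>.1 hone with h1 | h1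
  · exact ⟨(a, false), by
      rw [hy]; simp only [neighbor, Bool.false_eq_true, ↓reduceIte, add_right_inj, Pi.single_inj]
      omega⟩
  · exact ⟨(a, true), by
      rw [hy]; simp only [neighbor, ↓reduceIte, add_right_inj, Pi.single_inj]
      omega⟩

theorem lap_eq_sum (f : (Fin n → ℤ) → ℝ) (x : Fin n → ℤ) :
    lap n f x = 1 / deg n * ∑ p, (f (neighbor x p) - f x) := by
  classical
  have hsupp : Function.support (fun y => mu n x y * (f y - f x)) ⊆ univ.image (neighbor x) := by
    intro y hy
    obtain ⟨p, rfl⟩ := exists_eq_neighbor_of_mu_ne_zero (left_ne_zero_of_mul hy)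
    simp
  rw [lap, finsum_eq_sum_of_support_subset _ hsupp,
    sum_image fun p _ q _ h => neighbor_injective x h]
  simp [mu_neighbor]

theorem sum_coord_sub_mul (α : Fin n) (x : Fin n → ℤ) (F : Fin n × Bool → ℝ) :
    ∑ p, (coord α (neighbor x p) - coord α x) * F p = F (α, true) - F (α, false) := by
  simp [coord, neighbor, Pi.single_apply, Fintype.sum_prod_type, sub_eq_add_neg]

theorem sum_sum_neighbor_mul_comm {Ω : Finset (Fin n → ℤ)} {f g : (Fin n → ℤ) → ℝ}
    (hf : f ∈ supportedIn Ω) (hg : g ∈ supportedIn Ω) :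
    ∑ x ∈ Ω, ∑ p, f (neighbor x p) * g x = ∑ x ∈ Ω, ∑ p, f x * g (neighbor x p) := by
  classical
  let σ : (Fin n → ℤ) × (Fin n × Bool) → (Fin n → ℤ) × (Fin n × Bool) :=
    fun e => (neighbor e.1 e.2, (e.2.1, !e.2.2))
  have hσ : Function.Involutive σ := fun e => by
    simp only [σ, neighbor_neighbor, Bool.not_not]
  have hedges : ∀ G : (Fin n → ℤ) × (Fin n × Bool) → ℝ,
      (∀ e, neighbor e.1 e.2 ∉ Ω → G e = 0) →
      ∑ x ∈ Ω, ∑ p, G (x, p) = ∑ e ∈ Ω ×ˢ univ with neighbor e.1 e.2 ∈ Ω, G e := by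
    intro G hG
    rw [sum_filter_of_ne fun e _ he => by_contra fun h => he (hG e h), sum_product]
  rw [hedges (fun e => f (neighbor e.1 e.2) * g e.1)
      fun e h => by simp only [mem_supportedIn.1 hf _ h, zero_mul],
    hedges (fun e => f e.1 * g (neighbor e.1 e.2))
      fun e h => by simp only [mem_supportedIn.1 hg _ h, mul_zero]]
  refine sum_equiv (hσ.toPerm σ) (fun e => ?_) fun e _ => ?_
  · simp only [mem_filter, mem_product, mem_univ, and_true, Function.Involutive.coe_toPerm, σ,
      neighbor_neighbor]
    tauto
  · simp only [Function.Involutive.coe_toPerm, σ, neighbor_neighbor]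

end Lattice

section Schrodinger

variable {n : ℕ} {Ω : Finset (Fin n → ℤ)} {V ρ : (Fin n → ℤ) → ℝ}

variable (n Ω V ρ) in
noncomputable def schrodinger : Module.End ℝ ((Fin n → ℤ) → ℝ) where
  toFun f x := if x ∈ Ω then (-lap n f x + V x * f x) / ρ x else 0
  map_add' f g := by
    funext x
    simp only [Pi.add_apply, lap_eq_sum, add_sub_add_comm, sum_add_distrib]
    split_ifs <;> ring
  map_smul' c f := by
    funext x
    simp only [Pi.smul_apply, smul_eq_mul, RingHom.id_apply, lap_eq_sum, ← mul_sub, ← mul_sum]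
    split_ifs <;> ring

theorem schrodinger_apply (f : (Fin n → ℤ) → ℝ) (x : Fin n → ℤ) :
    schrodinger n Ω V ρ f x = if x ∈ Ω then (-lap n f x + V x * f x) / ρ x else 0 := rfl

theorem neg_lap_mul_deg (hn : 0 < n) (f : (Fin n → ℤ) → ℝ) (x : Fin n → ℤ) :
    -lap n f x * deg n = ∑ p, (f x - f (neighbor x p)) := by
  have hdeg := (deg_pos hn).ne'
  rw [lap_eq_sum]
  field_simp
  rw [← sum_neg_distrib]
  simp

theorem weightedInner_schrodinger (hρ : ∀ x ∈ Ω, ρ x ≠ 0) (f g : (Fin n → ℤ) → ℝ) :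
    weightedInner Ω (fun x => ρ x * deg n) (schrodinger n Ω V ρ f) g
      = ∑ x ∈ Ω, (-lap n f x + V x * f x) * g x * deg n := by
  refine sum_congr rfl fun x hx => ?_
  rw [schrodinger_apply, if_pos hx]
  field_simp [hρ x hx]

theorem weightedInner_schrodinger_comm (hn : 0 < n) (hρ : ∀ x ∈ Ω, ρ x ≠ 0)
    {f g : (Fin n → ℤ) → ℝ} (hf : f ∈ supportedIn Ω) (hg : g ∈ supportedIn Ω) :
    weightedInner Ω (fun x => ρ x * deg n) (schrodinger n Ω V ρ f) g
      = weightedInner Ω (fun x => ρ x * deg n) f (schrodinger n Ω V ρ g) := by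
  have key : ∀ f g : (Fin n → ℤ) → ℝ,
      weightedInner Ω (fun x => ρ x * deg n) (schrodinger n Ω V ρ f) g
        = ∑ x ∈ Ω, ∑ p, f x * g x - ∑ x ∈ Ω, ∑ p, f (neighbor x p) * g x
          + ∑ x ∈ Ω, V x * f x * g x * deg n := fun f g => by
    rw [weightedInner_schrodinger hρ, ← sum_sub_distrib, ← sum_add_distrib]
    refine sum_congr rfl fun x _ => ?_
    rw [add_mul, add_mul, mul_right_comm, neg_lap_mul_deg hn, sum_mul, ← sum_sub_distrib]
    simp only [sub_mul]
  rw [key, weightedInner_isSymm.eq f, key, sum_sum_neighbor_mul_comm hf hg]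
  simp only [mul_comm, mul_left_comm]

theorem lie_schrodinger_mulLeft_apply (α : Fin n) (f : (Fin n → ℤ) → ℝ) (x : Fin n → ℤ) :
    ⁅schrodinger n Ω V ρ, LinearMap.mulLeft ℝ (coord α)⁆ f x
      = if x ∈ Ω then -(f (neighbor x (α, true)) - f (neighbor x (α, false))) / (ρ x * deg n)
        else 0 := by
  simp only [Ring.lie_def, LinearMap.sub_apply, Module.End.mul_apply, LinearMap.mulLeft_apply,
    Pi.sub_apply, Pi.mul_apply, schrodinger_apply]
  split_ifs
  · have hsum : ∑ p, (coord α (neighbor x p) * f (neighbor x p) - coord α x * f x)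
        = ∑ p, (coord α (neighbor x p) - coord α x) * f (neighbor x p)
          + coord α x * ∑ p, (f (neighbor x p) - f x) := by
      rw [mul_sum, ← sum_add_distrib]
      exact sum_congr rfl fun p _ => by ring
    simp only [lap_eq_sum, Pi.mul_apply]
    rw [hsum, sum_coord_sub_mul]
    ring
  · simp

theorem lie_lie_schrodinger_mulLeft_apply (α : Fin n) (f : (Fin n → ℤ) → ℝ) (x : Fin n → ℤ) :
    ⁅⁅schrodinger n Ω V ρ, LinearMap.mulLeft ℝ (coord α)⁆, LinearMap.mulLeft ℝ (coord α)⁆ f x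
      = if x ∈ Ω then -(f (neighbor x (α, true)) + f (neighbor x (α, false))) / (ρ x * deg n)
        else 0 := by
  rw [Ring.lie_def ⁅schrodinger n Ω V ρ, LinearMap.mulLeft ℝ (coord α)⁆]
  simp only [LinearMap.sub_apply, Module.End.mul_apply, LinearMap.mulLeft_apply, Pi.sub_apply,
    Pi.mul_apply, lie_schrodinger_mulLeft_apply]
  split_ifs
  · simp only [coord, neighbor, Bool.false_eq_true, ↓reduceIte, Pi.add_apply, Pi.single_eq_same,
      Int.cast_add, Int.cast_one, Int.cast_neg]
    ring
  · simp

theorem sum_neighbor_mul_self (hn : 0 < n) (f : (Fin n → ℤ) → ℝ) (x : Fin n → ℤ) :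
    ∑ p, f (neighbor x p) * f x = deg n * f x ^ 2 - -lap n f x * f x * deg n := by
  rw [mul_right_comm, neg_lap_mul_deg hn, sum_sub_distrib, ← sum_mul]
  simp only [deg, sum_const, card_univ, Fintype.card_prod, Fintype.card_fin, Fintype.card_bool,
    nsmul_eq_mul, Nat.cast_mul, Nat.cast_ofNat]
  ring

theorem two_mul_sum_weightedInner_lie_mulLeft (hn : 0 < n) (hρ : ∀ x ∈ Ω, ρ x ≠ 0)
    {f : (Fin n → ℤ) → ℝ} (hf : f ∈ supportedIn Ω) {μ : ℝ} (hLf : schrodinger n Ω V ρ f = μ • f) :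
    2 * ∑ α, weightedInner Ω (fun x => ρ x * deg n)
        (⁅schrodinger n Ω V ρ, LinearMap.mulLeft ℝ (coord α)⁆ f) (LinearMap.mulLeft ℝ (coord α) f)
      = deg n * ∑ x ∈ Ω, f x ^ 2 - ∑ x ∈ Ω, -lap n f x * f x * deg n := by
  have hdeg := (deg_pos hn).ne'
  have hα : ∀ α, 2 * weightedInner Ω (fun x => ρ x * deg n)
      (⁅schrodinger n Ω V ρ, LinearMap.mulLeft ℝ (coord α)⁆ f) (LinearMap.mulLeft ℝ (coord α) f)
        = ∑ x ∈ Ω, (f (neighbor x (α, true)) + f (neighbor x (α, false))) * f x := fun α => by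
    rw [two_mul_apply_lie_eq (fun f hf g hg => weightedInner_schrodinger_comm hn hρ hf hg)
      (weightedInner_mulLeft_comm _) (fun _ => mulLeft_mem_supportedIn _) hf hLf,
      weightedInner_apply, ← sum_neg_distrib]
    refine sum_congr rfl fun x hx => ?_
    rw [lie_lie_schrodinger_mulLeft_apply, if_pos hx]
    field_simp [hρ x hx]
  rw [mul_sum, sum_congr rfl fun α _ => hα α, sum_comm, mul_sum, ← sum_sub_distrib]
  refine sum_congr rfl fun x _ => ?_
  rw [← sum_neighbor_mul_self hn, Fintype.sum_prod_type]
  simp [add_mul]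

theorem sum_weightedInner_lie_mulLeft_self_le (hn : 0 < n) {m : ℝ} (hm : 0 < m)
    (hmρ : ∀ x ∈ Ω, m ≤ ρ x) (f : (Fin n → ℤ) → ℝ) :
    ∑ α, weightedInner Ω (fun x => ρ x * deg n)
        (⁅schrodinger n Ω V ρ, LinearMap.mulLeft ℝ (coord α)⁆ f)
        (⁅schrodinger n Ω V ρ, LinearMap.mulLeft ℝ (coord α)⁆ f)
      ≤ 2 / (m * deg n) * ∑ x ∈ Ω, ∑ p, (f (neighbor x p) - f x) ^ 2 := by
  have hdeg := deg_pos hn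
  have hterm : ∀ α, ∀ x ∈ Ω,
      ⁅schrodinger n Ω V ρ, LinearMap.mulLeft ℝ (coord α)⁆ f x
          * ⁅schrodinger n Ω V ρ, LinearMap.mulLeft ℝ (coord α)⁆ f x * (ρ x * deg n)
        ≤ 2 / (m * deg n) * ((f (neighbor x (α, true)) - f x) ^ 2
          + (f (neighbor x (α, false)) - f x) ^ 2) := fun α x hx => by
    have hρx : 0 < ρ x := hm.trans_le (hmρ x hx)
    set a := f (neighbor x (α, true)) - f x
    set b := f (neighbor x (α, false)) - f x
    rw [lie_schrodinger_mulLeft_apply, if_pos hx,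
      show f (neighbor x (α, true)) - f (neighbor x (α, false)) = a - b by ring]
    calc -(a - b) / (ρ x * deg n) * (-(a - b) / (ρ x * deg n)) * (ρ x * deg n)
        = (a - b) ^ 2 / (ρ x * deg n) := by field_simp
      _ ≤ (a - b) ^ 2 / (m * deg n) := by gcongr; exact hmρ x hx
      _ ≤ 2 * (a ^ 2 + b ^ 2) / (m * deg n) := by gcongr; nlinarith [sq_nonneg (a + b)]
      _ = 2 / (m * deg n) * (a ^ 2 + b ^ 2) := by ring
  calc _ ≤ ∑ α, ∑ x ∈ Ω, 2 / (m * deg n) * ((f (neighbor x (α, true)) - f x) ^ 2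
          + (f (neighbor x (α, false)) - f x) ^ 2) :=
        sum_le_sum fun α _ => sum_le_sum (hterm α)
    _ = _ := by
      rw [sum_comm, mul_sum]
      refine sum_congr rfl fun x _ => ?_
      rw [← mul_sum, Fintype.sum_prod_type]
      simp

theorem sum_sum_neighbor_sub_sq_le (hn : 0 < n) {f : (Fin n → ℤ) → ℝ} (hf : f ∈ supportedIn Ω) :
    ∑ x ∈ Ω, ∑ p, (f (neighbor x p) - f x) ^ 2 ≤ 2 * ∑ x ∈ Ω, -lap n f x * f x * deg n := by
  have hsq : (fun x => f x ^ 2) ∈ supportedIn Ω :=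
    mem_supportedIn.2 fun x hx => by simp [mem_supportedIn.1 hf x hx]
  have hind : (fun x => if x ∈ Ω then (1 : ℝ) else 0) ∈ supportedIn Ω :=
    mem_supportedIn.2 fun x hx => if_neg hx
  have hle : ∑ x ∈ Ω, ∑ p, f (neighbor x p) ^ 2 ≤ ∑ x ∈ Ω, ∑ p : Fin n × Bool, f x ^ 2 :=
    calc _ = ∑ x ∈ Ω, ∑ p, f (neighbor x p) ^ 2 * (if x ∈ Ω then 1 else 0) :=
          sum_congr rfl fun x hx => by simp [hx]
      _ = ∑ x ∈ Ω, ∑ p, f x ^ 2 * (if neighbor x p ∈ Ω then 1 else 0) :=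
          sum_sum_neighbor_mul_comm hsq hind
      _ ≤ _ := sum_le_sum fun x _ => sum_le_sum fun p _ => by
          split_ifs <;> simp [sq_nonneg]
  have hlap : ∀ x, -lap n f x * f x * deg n = ∑ p, (f x - f (neighbor x p)) * f x := fun x => by
    rw [mul_right_comm, neg_lap_mul_deg hn, sum_mul]
  have hexpand : ∑ x ∈ Ω, ∑ p, (f (neighbor x p) - f x) ^ 2
      = 2 * ∑ x ∈ Ω, ∑ p, (f x - f (neighbor x p)) * f x
        + (∑ x ∈ Ω, ∑ p, f (neighbor x p) ^ 2 - ∑ x ∈ Ω, ∑ p : Fin n × Bool, f x ^ 2) := by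
    simp only [mul_sum, ← sum_sub_distrib, ← sum_add_distrib]
    exact sum_congr rfl fun x _ => sum_congr rfl fun p _ => by ring
  simp only [hlap]
  linarith

theorem isEigenbasis_schrodinger {ι : Type*} [DecidableEq ι] (hρ : ∀ x ∈ Ω, ρ x ≠ 0)
    {s : Finset ι} (hs : s.card = Ω.card) {u : ι → (Fin n → ℤ) → ℝ} {lam : ι → ℝ}
    (hu0 : ∀ i ∈ s, ∀ x ∉ Ω, u i x = 0)
    (heig : ∀ i ∈ s, ∀ x ∈ Ω, -lap n (u i) x + V x * u i x = lam i * ρ x * u i x)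
    (horth : ∀ i ∈ s, ∀ j ∈ s, ∑ x ∈ Ω, u i x * u j x * ρ x * deg n = if i = j then 1 else 0) :
    IsEigenbasis (weightedInner Ω fun x => ρ x * deg n) (schrodinger n Ω V ρ) (supportedIn Ω)
      s u lam := by
  have horth' : ∀ i ∈ s, ∀ j ∈ s,
      weightedInner Ω (fun x => ρ x * deg n) (u i) (u j) = if i = j then 1 else 0 :=
    fun i hi j hj => by simp only [weightedInner_apply, ← mul_assoc, horth i hi j hj]
  refine ⟨fun j hj => mem_supportedIn.2 (hu0 j hj), fun j hj => ?_, horth',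
    fun f hf => eq_sum_weightedInner_smul hs (fun j hj => mem_supportedIn.2 (hu0 j hj)) horth' hf⟩
  funext x
  rw [schrodinger_apply, Pi.smul_apply, smul_eq_mul]
  split_ifs with hx
  · rw [heig j hj x hx]
    field_simp [hρ x hx]
  · rw [hu0 j hj x hx, mul_zero]

theorem sum_neg_lap_mul_le (hV : ∀ x ∈ Ω, 0 ≤ V x) (hρ : ∀ x ∈ Ω, ρ x ≠ 0)
    {f : (Fin n → ℤ) → ℝ} {μ : ℝ} (hLf : schrodinger n Ω V ρ f = μ • f)
    (hnorm : weightedInner Ω (fun x => ρ x * deg n) f f = 1) :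
    ∑ x ∈ Ω, -lap n f x * f x * deg n ≤ μ := by
  have h := weightedInner_schrodinger (V := V) hρ f f
  rw [hLf, map_smul, LinearMap.smul_apply, hnorm, smul_eq_mul, mul_one] at h
  have hpot : 0 ≤ ∑ x ∈ Ω, V x * f x * f x * deg n := sum_nonneg fun x hx =>
    mul_nonneg (by rw [mul_assoc]; exact mul_nonneg (hV x hx) (mul_self_nonneg _)) deg_nonneg
  rw [h, ← sub_nonneg, ← sum_sub_distrib]
  convert hpot using 2
  ring

theorem inv_sub_le_two_mul_sum_weightedInner_lie_mulLeft (hn : 0 < n) (hV : ∀ x ∈ Ω, 0 ≤ V x)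
    (hρ : ∀ x ∈ Ω, ρ x ≠ 0) {M : ℝ} (hρM : ∀ x ∈ Ω, ρ x ≤ M)
    {f : (Fin n → ℤ) → ℝ} (hf : f ∈ supportedIn Ω) {μ : ℝ} (hLf : schrodinger n Ω V ρ f = μ • f)
    (hnorm : weightedInner Ω (fun x => ρ x * deg n) f f = 1) :
    1 / M - μ ≤ 2 * ∑ α, weightedInner Ω (fun x => ρ x * deg n)
        (⁅schrodinger n Ω V ρ, LinearMap.mulLeft ℝ (coord α)⁆ f)
        (LinearMap.mulLeft ℝ (coord α) f) := by
  have hM : 1 ≤ M * (deg n * ∑ x ∈ Ω, f x ^ 2) := by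
    rw [← hnorm, weightedInner_apply, mul_sum, mul_sum]
    exact sum_le_sum fun x hx => by
      nlinarith [hρM x hx, mul_nonneg (mul_self_nonneg (f x)) (deg_nonneg (n := n))]
  have hX : 0 ≤ deg n * ∑ x ∈ Ω, f x ^ 2 :=
    mul_nonneg deg_nonneg (sum_nonneg fun _ _ => sq_nonneg _)
  have hMpos : 0 < M := by
    by_contra h
    nlinarith [mul_nonpos_of_nonpos_of_nonneg (not_lt.1 h) hX]
  have hinv : 1 / M ≤ deg n * ∑ x ∈ Ω, f x ^ 2 := by
    rw [div_le_iff₀ hMpos]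
    linarith
  rw [two_mul_sum_weightedInner_lie_mulLeft hn hρ hf hLf]
  linarith [sum_neg_lap_mul_le hV hρ hLf hnorm]

theorem sum_weightedInner_lie_mulLeft_self_le_of_eigen (hn : 0 < n) (hV : ∀ x ∈ Ω, 0 ≤ V x)
    {m : ℝ} (hm : 0 < m) (hmρ : ∀ x ∈ Ω, m ≤ ρ x)
    {f : (Fin n → ℤ) → ℝ} (hf : f ∈ supportedIn Ω) {μ : ℝ} (hLf : schrodinger n Ω V ρ f = μ • f)
    (hnorm : weightedInner Ω (fun x => ρ x * deg n) f f = 1) :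
    ∑ α, weightedInner Ω (fun x => ρ x * deg n)
        (⁅schrodinger n Ω V ρ, LinearMap.mulLeft ℝ (coord α)⁆ f)
        (⁅schrodinger n Ω V ρ, LinearMap.mulLeft ℝ (coord α)⁆ f) ≤ 4 / (m * deg n) * μ := by
  have hρ : ∀ x ∈ Ω, ρ x ≠ 0 := fun x hx => (hm.trans_le (hmρ x hx)).ne'
  have hdeg := deg_pos hn
  calc _ ≤ 2 / (m * deg n) * ∑ x ∈ Ω, ∑ p, (f (neighbor x p) - f x) ^ 2 :=
        sum_weightedInner_lie_mulLeft_self_le hn hm hmρ f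
    _ ≤ 2 / (m * deg n) * (2 * μ) := by
        gcongr
        exact (sum_sum_neighbor_sub_sq_le hn hf).trans
          (by linarith [sum_neg_lap_mul_le hV hρ hLf hnorm])
    _ = 4 / (m * deg n) * μ := by ring

theorem sum_sq_mul_inv_sub_le {ι : Type*} [DecidableEq ι] (hn : 0 < n) (hV : ∀ x ∈ Ω, 0 ≤ V x)
    {m M : ℝ} (hm : 0 < m) (hmρ : ∀ x ∈ Ω, m ≤ ρ x) (hρM : ∀ x ∈ Ω, ρ x ≤ M)
    {s : Finset ι} (hs : s.card = Ω.card) {u : ι → (Fin n → ℤ) → ℝ} {lam : ι → ℝ}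
    (hu0 : ∀ i ∈ s, ∀ x ∉ Ω, u i x = 0)
    (heig : ∀ i ∈ s, ∀ x ∈ Ω, -lap n (u i) x + V x * u i x = lam i * ρ x * u i x)
    (horth : ∀ i ∈ s, ∀ j ∈ s, ∑ x ∈ Ω, u i x * u j x * ρ x * deg n = if i = j then 1 else 0)
    {t : Finset ι} (hts : t ⊆ s) {Λ : ℝ} (hlow : ∀ i ∈ t, lam i ≤ Λ)
    (hhigh : ∀ j ∈ s \ t, Λ ≤ lam j) :
    ∑ i ∈ t, (Λ - lam i) ^ 2 * (1 / M - lam i)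
      ≤ 8 / (m * deg n) * ∑ i ∈ t, (Λ - lam i) * lam i := by
  have hρ : ∀ x ∈ Ω, ρ x ≠ 0 := fun x hx => (hm.trans_le (hmρ x hx)).ne'
  have hu := isEigenbasis_schrodinger (V := V) hρ hs hu0 heig horth
  have hnorm : ∀ i ∈ s, weightedInner Ω (fun x => ρ x * deg n) (u i) (u i) = 1 :=
    fun i hi => by rw [hu.orthonormal i hi i hi, if_pos rfl]
  set B := weightedInner Ω fun x => ρ x * deg n
  set C := fun α : Fin n => ⁅schrodinger n Ω V ρ, LinearMap.mulLeft ℝ (coord α)⁆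
  have hyang : ∑ i ∈ t, (Λ - lam i) ^ 2 * ∑ α, B (C α (u i)) (LinearMap.mulLeft ℝ (coord α) (u i))
      ≤ ∑ i ∈ t, (Λ - lam i) * ∑ α, B (C α (u i)) (C α (u i)) := by
    simp only [mul_sum]
    rw [sum_comm, sum_comm (s := t)]
    exact sum_le_sum fun α _ => hu.sum_sq_mul_lie_le weightedInner_isSymm
      (weightedInner_isNonneg fun x hx => mul_nonneg (hm.le.trans (hmρ x hx)) deg_nonneg)
      (fun f hf g hg => weightedInner_schrodinger_comm hn hρ hf hg)
      (weightedInner_mulLeft_comm _) (fun _ => mulLeft_mem_supportedIn _) hts hlow hhigh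
  calc ∑ i ∈ t, (Λ - lam i) ^ 2 * (1 / M - lam i)
      ≤ ∑ i ∈ t, (Λ - lam i) ^ 2 *
          (2 * ∑ α, B (C α (u i)) (LinearMap.mulLeft ℝ (coord α) (u i))) :=
        sum_le_sum fun i hi => mul_le_mul_of_nonneg_left
          (inv_sub_le_two_mul_sum_weightedInner_lie_mulLeft hn hV hρ hρM (hu.mem i (hts hi))
            (hu.apply_eq i (hts hi)) (hnorm i (hts hi))) (sq_nonneg _)
    _ = 2 * ∑ i ∈ t, (Λ - lam i) ^ 2 *
          ∑ α, B (C α (u i)) (LinearMap.mulLeft ℝ (coord α) (u i)) := by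
        rw [mul_sum]
        exact sum_congr rfl fun _ _ => by ring
    _ ≤ 2 * ∑ i ∈ t, (Λ - lam i) * ∑ α, B (C α (u i)) (C α (u i)) := by linarith
    _ ≤ 2 * ∑ i ∈ t, (Λ - lam i) * (4 / (m * deg n) * lam i) := by
        gcongr with i hi
        · exact sub_nonneg.2 (hlow i hi)
        · exact sum_weightedInner_lie_mulLeft_self_le_of_eigen hn hV hm hmρ (hu.mem i (hts hi))
            (hu.apply_eq i (hts hi)) (hnorm i (hts hi))
    _ = 8 / (m * deg n) * ∑ i ∈ t, (Λ - lam i) * lam i := by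
        rw [mul_sum, mul_sum]
        exact sum_congr rfl fun _ _ => by ring

end Schrodinger

theorem yang_first_type_general (n : ℕ) (hn : 0 < n) (Ω : Finset (Fin n → ℤ)) (hne : Ω.Nonempty)
    (V ρ : (Fin n → ℤ) → ℝ)
    (hV : ∀ x ∈ Ω, 0 ≤ V x) (hρ : ∀ x ∈ Ω, 0 < ρ x)
    (lam : ℕ → ℝ) (u : ℕ → (Fin n → ℤ) → ℝ)
    (hu0 : ∀ i ∈ Finset.Icc 1 Ω.card, ∀ x ∉ Ω, u i x = 0)
    (heig : ∀ i ∈ Finset.Icc 1 Ω.card, ∀ x ∈ Ω,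
      -(lap n (u i) x) + V x * u i x = lam i * ρ x * u i x)
    (horth : ∀ i ∈ Finset.Icc 1 Ω.card, ∀ j ∈ Finset.Icc 1 Ω.card,
      ∑ x ∈ Ω, u i x * u j x * ρ x * deg n = if i = j then 1 else 0)
    (hmono : ∀ i j : ℕ, 1 ≤ i → i ≤ j → j ≤ Ω.card → lam i ≤ lam j)
    (k : ℕ) (hk2 : k ≤ Ω.card - 1) :
    ∑ i ∈ Finset.Icc 1 k, (lam (k + 1) - lam i) *
        (lam (k + 1) * (Ω.inf' hne ρ / Ω.sup' hne ρ - Ω.inf' hne ρ * lam i)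
          - lam i * (Ω.inf' hne ρ / Ω.sup' hne ρ - Ω.inf' hne ρ * lam i + 4 / n))
      ≤ 0 := by
  set m := Ω.inf' hne ρ
  have hm : 0 < m := by
    obtain ⟨x, hx, hmx⟩ := exists_mem_eq_inf' hne ρ
    exact (hρ x hx).trans_eq hmx.symm
  have hk : k + 1 ≤ Ω.card := by have := hne.card_pos; omega
  have key := sum_sq_mul_inv_sub_le hn hV hm (fun x hx => inf'_le ρ hx)
    (M := Ω.sup' hne ρ) (fun x hx => le_sup' ρ hx)
    (by simp) hu0 heig horth (Icc_subset_Icc_right (by omega : k ≤ Ω.card)) (Λ := lam (k + 1))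
    (fun i hi => hmono i (k + 1) (mem_Icc.1 hi).1 ((mem_Icc.1 hi).2.trans k.le_succ) hk)
    (fun j hj => by
      simp only [mem_sdiff, mem_Icc, not_and, not_le] at hj
      exact hmono (k + 1) j (by omega) (hj.2 hj.1.1) hj.1.2)
  calc _ = m * (∑ i ∈ Icc 1 k, (lam (k + 1) - lam i) ^ 2 * (1 / Ω.sup' hne ρ - lam i)
        - 8 / (m * deg n) * ∑ i ∈ Icc 1 k, (lam (k + 1) - lam i) * lam i) := by
        rw [mul_sub, mul_sum, mul_sum, mul_sum, ← sum_sub_distrib]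
        refine sum_congr rfl fun i _ => ?_
        simp only [deg]
        field_simp
        ring
    _ ≤ 0 := mul_nonpos_of_nonneg_of_nonpos hm.le (by linarith)

/-- Yang's first type inequality for the discrete Schrödinger operator on a
finite subset of `ℤⁿ`. -/
theorem yang_first_type (n : ℕ) (hn : 0 < n) (Ω : Finset (Fin n → ℤ)) (hne : Ω.Nonempty)
    (V ρ : (Fin n → ℤ) → ℝ)
    (hV : ∀ x ∈ Ω, 0 ≤ V x) (hρ : ∀ x ∈ Ω, 0 < ρ x)
    (lam : ℕ → ℝ) (u : ℕ → (Fin n → ℤ) → ℝ)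
    (hu0 : ∀ i ∈ Finset.Icc 1 Ω.card, ∀ x ∉ Ω, u i x = 0)
    (heig : ∀ i ∈ Finset.Icc 1 Ω.card, ∀ x ∈ Ω,
      -(lap n (u i) x) + V x * u i x = lam i * ρ x * u i x)
    (horth : ∀ i ∈ Finset.Icc 1 Ω.card, ∀ j ∈ Finset.Icc 1 Ω.card,
      ∑ x ∈ Ω, u i x * u j x * ρ x * deg n = if i = j then 1 else 0)
    (hmono : ∀ i j : ℕ, 1 ≤ i → i ≤ j → j ≤ Ω.card → lam i ≤ lam j)
    (hpos : 0 < lam 1)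
    (k : ℕ) (hk1 : 1 ≤ k) (hk2 : k ≤ Ω.card - 1) :
    ∑ i ∈ Finset.Icc 1 k, (lam (k + 1) - lam i) *
        (lam (k + 1) * (Ω.inf' hne ρ / Ω.sup' hne ρ - Ω.inf' hne ρ * lam i)
          - lam i * (Ω.inf' hne ρ / Ω.sup' hne ρ - Ω.inf' hne ρ * lam i + 4 / n))
      ≤ 0 :=
  yang_first_type_general n hn Ω hne V ρ hV hρ lam u hu0 heig horth hmono k hk2
end

section
/- If real numbers 0 < λ_1 ≤ ⋯ ≤ λ_{k+1} satisfy the Yang-type inequality Σ_{i=1}^k (λ_{k+1} − λ_i)( λ_{k+1}(c − s λ_i) − λ_i(c − s λ_i + 4/n) ) ≤ 0 with constants c, s > 0 (c = ρ_min/ρ_max, s = ρ_min), then they also satisfy the averaged quadratic inequality obtained by applying Cauchy–Schwarz/Chebyshev-type summation, namely the Hile–Protter form Σ_{i=1}^k λ_i/(λ_{k+1} − λ_i) ≥ (nk/4)( c − (s/k) Σ_{i=1}^k λ_i ), provided λ_{k+1} > λ_k. -/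
open Finset

/-! Write `aᵢ = λ_{k+1} - λᵢ > 0`. The Yang inequality says `∑ aᵢ² (c - s λᵢ) ≤ (4/n) ∑ aᵢ λᵢ`.
Since `aᵢ²` and `c - s λᵢ` both decrease with `λᵢ`, Chebyshev's sum inequality bounds the left
side below by `(1/k) (∑ aᵢ²) ∑ (c - s λᵢ)`; since `aᵢ²` decreases and `λᵢ / aᵢ` increases,
and `aᵢ λᵢ = aᵢ² · λᵢ / aᵢ`, it bounds `∑ aᵢ λᵢ` above by `(1/k) (∑ aᵢ²) ∑ λᵢ / aᵢ`.
Cancelling `∑ aᵢ² > 0` leaves `∑ (c - s λᵢ) ≤ (4/n) ∑ λᵢ / aᵢ`, the Hile–Protter inequality. -/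

section Chebyshev

variable {ι : Type*} {s : Finset ι} {l : ι → ℝ} {Λ : ℝ}

lemma sum_sq_sub_mul_sum_le_card_mul_sum {α β : ℝ} (hβ : 0 ≤ β) (hl : ∀ i ∈ s, l i < Λ) :
    (∑ i ∈ s, (Λ - l i) ^ 2) * ∑ i ∈ s, (α - β * l i)
      ≤ #s * ∑ i ∈ s, (Λ - l i) ^ 2 * (α - β * l i) := by
  refine MonovaryOn.sum_mul_sum_le_card_mul_sum fun i hi j hj hij => ?_
  have hji : l j < l i := lt_of_mul_lt_mul_left (by linarith) hβ
  have hiΛ := hl i hi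
  nlinarith

lemma card_mul_sum_sub_mul_le_sum_sq_sub_mul_sum (hl : ∀ i ∈ s, 0 ≤ l i ∧ l i < Λ) :
    #s * ∑ i ∈ s, (Λ - l i) * l i
      ≤ (∑ i ∈ s, (Λ - l i) ^ 2) * ∑ i ∈ s, l i / (Λ - l i) := by
  have hratio : AntivaryOn (fun i => (Λ - l i) ^ 2) (fun i => l i / (Λ - l i)) s := by
    intro i hi j hj hij
    obtain ⟨hi0, hiΛ⟩ := hl i hi
    obtain ⟨hj0, hjΛ⟩ := hl j hj
    have hij' : l i < l j := by
      by_contra! hji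
      exact hij.not_ge (div_le_div₀ hi0 hji (by linarith) (by linarith))
    simp only
    nlinarith
  calc #s * ∑ i ∈ s, (Λ - l i) * l i
      = #s * ∑ i ∈ s, (Λ - l i) ^ 2 * (l i / (Λ - l i)) := by
        congr 1
        refine sum_congr rfl fun i hi => ?_
        have : Λ - l i ≠ 0 := by linarith [(hl i hi).2]
        field_simp
    _ ≤ _ := hratio.card_mul_sum_le_sum_mul_sum

lemma sum_sub_mul_le_mul_sum_div_of_yang {α β μ : ℝ} (hs : s.Nonempty) (hβ : 0 ≤ β)
    (hμ : 0 ≤ μ) (hl : ∀ i ∈ s, 0 ≤ l i ∧ l i < Λ)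
    (hyang : ∑ i ∈ s, (Λ - l i) * (Λ * (α - β * l i) - l i * (α - β * l i + μ)) ≤ 0) :
    ∑ i ∈ s, (α - β * l i) ≤ μ * ∑ i ∈ s, l i / (Λ - l i) := by
  have hyang' : ∑ i ∈ s, (Λ - l i) ^ 2 * (α - β * l i) ≤ μ * ∑ i ∈ s, (Λ - l i) * l i := by
    rw [mul_sum, ← sub_nonpos, ← sum_sub_distrib]
    exact (sum_congr rfl fun i _ => by ring).trans_le hyang
  have hA : 0 < ∑ i ∈ s, (Λ - l i) ^ 2 :=
    sum_pos (fun i hi => pow_pos (sub_pos.2 (hl i hi).2) 2) hs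
  refine le_of_mul_le_mul_left ?_ hA
  calc (∑ i ∈ s, (Λ - l i) ^ 2) * ∑ i ∈ s, (α - β * l i)
      ≤ #s * ∑ i ∈ s, (Λ - l i) ^ 2 * (α - β * l i) :=
        sum_sq_sub_mul_sum_le_card_mul_sum hβ fun i hi => (hl i hi).2
    _ ≤ #s * (μ * ∑ i ∈ s, (Λ - l i) * l i) := by gcongr
    _ = μ * (#s * ∑ i ∈ s, (Λ - l i) * l i) := by ring
    _ ≤ μ * ((∑ i ∈ s, (Λ - l i) ^ 2) * ∑ i ∈ s, l i / (Λ - l i)) :=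
        mul_le_mul_of_nonneg_left (card_mul_sum_sub_mul_le_sum_sq_sub_mul_sum hl) hμ
    _ = (∑ i ∈ s, (Λ - l i) ^ 2) * (μ * ∑ i ∈ s, l i / (Λ - l i)) := by ring

end Chebyshev

theorem yang_implies_hile_protter_general (n : ℕ) (hn : 0 < n) (k : ℕ) (hk : 1 ≤ k)
    (lam : ℕ → ℝ) (hpos : 0 < lam 1)
    (hmono : ∀ i j : ℕ, 1 ≤ i → i ≤ j → j ≤ k + 1 → lam i ≤ lam j)
    (hgap : lam k < lam (k + 1))
    (c s : ℝ) (hs : 0 < s)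
    (hyang : ∑ i ∈ Finset.Icc 1 k, (lam (k + 1) - lam i) *
        (lam (k + 1) * (c - s * lam i) - lam i * (c - s * lam i + 4 / n)) ≤ 0) :
    ∑ i ∈ Finset.Icc 1 k, lam i / (lam (k + 1) - lam i)
      ≥ ((n : ℝ) * k / 4) * (c - (s / k) * ∑ i ∈ Finset.Icc 1 k, lam i) := by
  have hlam : ∀ i ∈ Icc 1 k, 0 ≤ lam i ∧ lam i < lam (k + 1) := fun i hi => by
    obtain ⟨h1i, hik⟩ := mem_Icc.1 hi
    exact ⟨hpos.le.trans (hmono 1 i le_rfl h1i (by omega)),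
      (hmono i k h1i hik (by omega)).trans_lt hgap⟩
  have hHP := sum_sub_mul_le_mul_sum_div_of_yang ⟨1, mem_Icc.2 ⟨le_rfl, hk⟩⟩ hs.le
    (by positivity) hlam hyang
  rw [sum_sub_distrib, sum_const, Nat.card_Icc, Nat.add_sub_cancel, ← mul_sum, nsmul_eq_mul]
    at hHP
  have hk' : (k : ℝ) ≠ 0 := Nat.cast_ne_zero.2 (by omega)
  have hn' : (n : ℝ) ≠ 0 := Nat.cast_ne_zero.2 hn.ne'
  calc ((n : ℝ) * k / 4) * (c - (s / k) * ∑ i ∈ Icc 1 k, lam i)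
      = (n / 4) * (k * c - s * ∑ i ∈ Icc 1 k, lam i) := by field_simp
    _ ≤ (n / 4) * (4 / n * ∑ i ∈ Icc 1 k, lam i / (lam (k + 1) - lam i)) := by gcongr
    _ = ∑ i ∈ Icc 1 k, lam i / (lam (k + 1) - lam i) := by field_simp

/-- Abstract implication Yang 1 ⇒ Hile–Protter at the level of real sequences:
if `0 < λ₁ ≤ ⋯ ≤ λ_k < λ_{k+1}` satisfy the Yang-type inequality with constants
`c = ρ_min/ρ_max ∈ (0,1]` and `s = ρ_min > 0`, then they satisfy the
Hile–Protter form. -/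
theorem yang_implies_hile_protter (n : ℕ) (hn : 0 < n) (k : ℕ) (hk : 1 ≤ k)
    (lam : ℕ → ℝ) (hpos : 0 < lam 1)
    (hmono : ∀ i j : ℕ, 1 ≤ i → i ≤ j → j ≤ k + 1 → lam i ≤ lam j)
    (hgap : lam k < lam (k + 1))
    (c s : ℝ) (hc0 : 0 < c) (hc1 : c ≤ 1) (hs : 0 < s)
    (hyang : ∑ i ∈ Finset.Icc 1 k, (lam (k + 1) - lam i) *
        (lam (k + 1) * (c - s * lam i) - lam i * (c - s * lam i + 4 / n)) ≤ 0) :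
    ∑ i ∈ Finset.Icc 1 k, lam i / (lam (k + 1) - lam i)
      ≥ ((n : ℝ) * k / 4) * (c - (s / k) * ∑ i ∈ Finset.Icc 1 k, lam i) :=
  yang_implies_hile_protter_general n hn k hk lam hpos hmono hgap c s hs hyang
end
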